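/- Let a = (a_1, …, a_r) with all a_i ≥ 2 integers, let k = (k_1, …, k_r) ∈ ℕ^r be admissible with Z_r(k_1, …, k_r) = 0 and k_i ≤ a_i for all i, and fix t ∈ ℂ. Let P_0 = 1, P_1 = z_1, and P_2, …, P_{r+1} ∈ ℂ[z_0, z_1] be the polynomials determined by the recursion P_{i-1}·P_{i+1} = P_i^{a_i} + t·P_i^{k_i}·z_0^{(a_i − k_i)·Z_{i-2}(a_2, …, a_{i-1})}. For each j choose complex numbers ξ_{j,1}, …, ξ_{j,a_j−k_j} such that ∏_{ℓ=1}^{a_j−k_j}(X + ξ_{j,ℓ}) = X^{a_j−k_j} + t in ℂ[X]. Then P_{r+1} = ∏_{j=1}^{r} ∏_{ℓ=1}^{a_j−k_j} ( P_j + ξ_{j,ℓ}·z_0^{Z_{j-2}(a_2, …, a_{j-1})} )^{Z_{j-1}(k_1, …, k_{j-1})}. -/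

import Mathlib

/-- Auxiliary: continuant computed from the *front* of the list; applied to the
reversed list it gives the continuant of the paper. -/
def Zrev {R : Type*} [CommRing R] : List R → R
  | [] => 1
  | [x] => x
  | x :: y :: l => x * Zrev (y :: l) - Zrev l

/-- The continuant polynomial `Z_n(x_1,…,x_n)` (with `Z_{-1}=0`, `Z_0=1`) satisfying
`Z_n(x_1,…,x_n) = x_n·Z_{n-1}(x_1,…,x_{n-1}) - Z_{n-2}(x_1,…,x_{n-2})`. -/
def Zc {R : Type*} [CommRing R] (l : List R) : R := Zrev l.reverse

/-- The Hirzebruch–Jung continued fraction `[x_1,…,x_n] = x_1 - 1/[x_2,…,x_n]`. -/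
noncomputable def hj {K : Type*} [Field K] : List K → K
  | [] => 0
  | [x] => x
  | x :: y :: l => x - 1 / hj (y :: l)

/-- The `n×n` tridiagonal matrix `M(x_1,…,x_n)` with diagonal entries `x_i`,
entries `-1` immediately above and below the diagonal, `0` elsewhere. -/
def triMat {n : ℕ} {R : Type*} [CommRing R] (x : Fin n → R) :
    Matrix (Fin n) (Fin n) R :=
  Matrix.of fun i j =>
    if i = j then x i
    else if (i : ℕ) + 1 = (j : ℕ) ∨ (j : ℕ) + 1 = (i : ℕ) then -1 else 0

/-- A tuple `x ∈ ℕ^n` is admissible if `M(x)` is positive semidefinite of rank `≥ n-1`. -/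
def Admissible {n : ℕ} (x : Fin n → ℕ) : Prop :=
  (triMat fun i => (x i : ℝ)).PosSemidef ∧ n - 1 ≤ (triMat fun i => (x i : ℝ)).rank

/-!
Put `W_j = ∏_ℓ (P_j + ξ_{j,ℓ} z_0^{E_j})` with `E_j = Z_{j-2}(a_2,…,a_{j-1})`. Homogenizing the
factorization of `X^{a_j-k_j} + t` gives `W_j = P_j^{a_j-k_j} + t z_0^{(a_j-k_j) E_j}`, so the
recursion reads `P_{i-1} P_{i+1} = P_i^{k_i} W_i`. The `P_i` are nonzero (at `z_0 = 1` they are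
monic in `z_1` of strictly increasing degree, as `a_i ≥ 2`), so by cancellation
`P_{i+1} = z_1^{Z(k_1..k_i)} ∏_{j ≤ i} W_j^{Z(k_{j+1}..k_i)}`: the exponents obey the continuant
recursion, and they are nonnegative because they are principal minors of the positive
semidefinite matrix `M(k)`. At `i = r` the exponent of `z_1` is `Z_r(k) = 0`; then
`Z(k_1..k_j) Z(k_{j+1}..k_r) = Z(k_1..k_{j-1}) Z(k_{j+2}..k_r)`, and coprimality of consecutive
continuants together with nonnegativity forces `Z(k_{j+1}..k_r) = Z(k_1..k_{j-1})`.
-/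

section Continuant

variable {R : Type*} [CommRing R]

lemma Zrev_cons_cons (x y : R) (l : List R) : Zrev (x :: y :: l) = x * Zrev (y :: l) - Zrev l :=
  rfl

lemma Zrev_append_pair (l : List R) (y x : R) :
    Zrev (l ++ [y, x]) = x * Zrev (l ++ [y]) - Zrev l := by
  induction l using Zrev.induct with
  | case1 => simp only [List.nil_append, Zrev_cons_cons, Zrev]; ring
  | case2 z => simp only [List.cons_append, List.nil_append, Zrev_cons_cons, Zrev]; ring
  | case3 z w l ih₁ ih₂ =>
    simp only [List.cons_append, Zrev_cons_cons] at ih₁ ⊢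
    rw [ih₁, ih₂]
    ring

lemma Zrev_reverse (l : List R) : Zrev l.reverse = Zrev l := by
  induction l using Zrev.induct with
  | case1 => rfl
  | case2 => rfl
  | case3 x y l ih₁ ih₂ =>
    rw [List.reverse_cons, List.reverse_cons, List.append_assoc, List.singleton_append,
      Zrev_append_pair, ← List.reverse_cons, ih₁, ih₂, Zrev_cons_cons]

lemma Zc_eq_Zrev (l : List R) : Zc l = Zrev l := Zrev_reverse l

lemma Zc_cons_cons (x y : R) (l : List R) : Zc (x :: y :: l) = x * Zc (y :: l) - Zc l := by
  simp only [Zc_eq_Zrev, Zrev_cons_cons]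

lemma Zc_append_pair (l : List R) (y x : R) : Zc (l ++ [y, x]) = x * Zc (l ++ [y]) - Zc l := by
  simp only [Zc_eq_Zrev, Zrev_append_pair]

lemma isCoprime_Zrev_cons (x : R) (l : List R) : IsCoprime (Zrev (x :: l)) (Zrev l) := by
  induction l generalizing x with
  | nil => exact isCoprime_one_right
  | cons y l ih =>
    rw [Zrev_cons_cons, sub_eq_neg_add]
    exact (ih y).symm.neg_left.add_mul_right_left x

lemma isCoprime_Zc_cons (x : R) (l : List R) : IsCoprime (Zc (x :: l)) (Zc l) := by
  simpa only [Zc_eq_Zrev] using isCoprime_Zrev_cons x l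

lemma isCoprime_Zc_append_singleton (l : List R) (x : R) :
    IsCoprime (Zc (l ++ [x])) (Zc l) := by
  simpa only [Zc, List.reverse_append, List.reverse_singleton, List.singleton_append] using
    isCoprime_Zrev_cons x l.reverse

lemma map_Zc {S : Type*} [CommRing S] (f : R →+* S) (l : List R) :
    Zc (l.map f) = f (Zc l) := by
  simp only [Zc_eq_Zrev]
  induction l using Zrev.induct with
  | case1 => simp [Zrev]
  | case2 x => simp [Zrev]
  | case3 x y l ih₁ ih₂ =>
    simp only [List.map_cons, Zrev_cons_cons, ← ih₁, ← ih₂, map_sub, map_mul]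

end Continuant

section Segment

variable {R : Type*} [CommRing R] (g : ℕ → R)

def Zseg (j i : ℕ) : R := Zc ((List.range' (j + 1) (i - j)).map g)

lemma range'_add_one_sub_eq_append {j i : ℕ} (h : j ≤ i) :
    List.range' (j + 1) (i + 1 - j) = List.range' (j + 1) (i - j) ++ [i + 1] := by
  rw [show i + 1 - j = i - j + 1 by omega, List.range'_concat]
  congr 2
  omega

@[simp]
lemma Zseg_self (j : ℕ) : Zseg g j j = 1 := by simp [Zseg, Zc, Zrev]

@[simp]
lemma Zseg_succ_self (j : ℕ) : Zseg g j (j + 1) = g (j + 1) := by simp [Zseg, Zc, Zrev]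

lemma Zseg_add_two {j i : ℕ} (h : j ≤ i) :
    Zseg g j (i + 2) = g (i + 2) * Zseg g j (i + 1) - Zseg g j i := by
  simp only [Zseg]
  rw [range'_add_one_sub_eq_append (by omega : j ≤ i + 1), range'_add_one_sub_eq_append h,
    List.map_append, List.map_append, List.append_assoc]
  exact Zc_append_pair _ _ _

lemma isCoprime_Zseg_succ_right {j i : ℕ} (h : j ≤ i) :
    IsCoprime (Zseg g j (i + 1)) (Zseg g j i) := by
  simp only [Zseg]
  rw [range'_add_one_sub_eq_append h, List.map_append]
  exact isCoprime_Zc_append_singleton _ _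

lemma isCoprime_Zseg_succ_left {j i : ℕ} (h : j < i) :
    IsCoprime (Zseg g j i) (Zseg g (j + 1) i) := by
  simp only [Zseg]
  rw [show i - j = i - (j + 1) + 1 by omega, List.range'_succ, List.map_cons]
  exact isCoprime_Zc_cons _ _

lemma Zseg_split {s j i : ℕ} (hs : s ≤ j) (hi : j + 2 ≤ i) :
    Zseg g s i = Zseg g s (j + 1) * Zseg g (j + 1) i - Zseg g s j * Zseg g (j + 2) i := by
  obtain ⟨n, rfl⟩ := Nat.exists_eq_add_of_le hi
  induction n using Nat.twoStepInduction with
  | zero =>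
    simp only [add_zero, Zseg_add_two g hs, Zseg_succ_self, Zseg_self]
    ring
  | one =>
    rw [Zseg_add_two g (by omega : s ≤ j + 1), Zseg_add_two g (le_refl (j + 1)),
      Zseg_add_two g hs]
    simp only [Zseg_self, Zseg_succ_self]
    ring
  | more n ih₁ ih₂ =>
    rw [← add_assoc] at ih₂ ⊢
    rw [Zseg_add_two g (by omega : s ≤ j + 2 + n), Zseg_add_two g (by omega : j + 1 ≤ j + 2 + n),
      Zseg_add_two g (by omega : j + 2 ≤ j + 2 + n), ih₁ (by omega), ih₂ (by omega)]
    ring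

lemma Zseg_succ_eq_of_Zseg_eq_zero {g : ℕ → ℤ} {r : ℕ} (h0 : Zseg g 0 r = 0)
    (hnn : ∀ j i, j ≤ i → i ≤ r → 0 ≤ Zseg g j i) {j : ℕ} (hj : j < r) :
    Zseg g (j + 1) r = Zseg g 0 j := by
  obtain rfl | hjr := (Nat.succ_le_of_lt hj).eq_or_lt
  · have hu : IsUnit (Zseg g 0 j) :=
      isCoprime_zero_left.mp (h0 ▸ isCoprime_Zseg_succ_right g (Nat.zero_le j))
    rcases Int.isUnit_iff.mp hu with h | h
    · simp [h]
    · linarith [hnn 0 j (Nat.zero_le j) hj.le]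
  · have hsplit := Zseg_split g (Nat.zero_le j) hjr
    rw [h0, eq_comm, sub_eq_zero] at hsplit
    have hdvd₁ : Zseg g 0 j ∣ Zseg g (j + 1) r :=
      (isCoprime_Zseg_succ_right g (Nat.zero_le j)).symm.dvd_of_dvd_mul_left ⟨_, hsplit⟩
    have hdvd₂ : Zseg g (j + 1) r ∣ Zseg g 0 j :=
      (isCoprime_Zseg_succ_left g (by omega : j + 1 < r)).dvd_of_dvd_mul_right
        ⟨Zseg g 0 (j + 1), by linear_combination -hsplit⟩
    exact Int.dvd_antisymm (hnn _ _ hj le_rfl) (hnn _ _ (Nat.zero_le j) hj.le) hdvd₂ hdvd₁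

lemma toNat_Zseg_add_two_add {k : ℕ → ℕ} {r : ℕ}
    (hnn : ∀ j i, j ≤ i → i ≤ r → 0 ≤ Zseg (fun m => (k m : ℤ)) j i) {j i : ℕ} (hji : j ≤ i)
    (hi : i + 2 ≤ r) :
    (Zseg (fun m => (k m : ℤ)) j (i + 2)).toNat + (Zseg (fun m => (k m : ℤ)) j i).toNat =
      k (i + 2) * (Zseg (fun m => (k m : ℤ)) j (i + 1)).toNat := by
  have h := Zseg_add_two (fun m => (k m : ℤ)) hji
  zify
  rw [Int.toNat_of_nonneg (hnn j (i + 2) (by omega) hi),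
    Int.toNat_of_nonneg (hnn j i hji (by omega)),
    Int.toNat_of_nonneg (hnn j (i + 1) (by omega) (by omega))]
  linear_combination h

end Segment

section Tridiagonal

variable {R : Type*} [CommRing R]

lemma triMat_submatrix_of_val_eq_add {m n : ℕ} (x : Fin n → R) {e : Fin m → Fin n} (c : ℕ)
    (he : ∀ s, (e s : ℕ) = c + s) : (triMat x).submatrix e e = triMat (x ∘ e) := by
  ext s u
  simp only [triMat, Matrix.submatrix_apply, Matrix.of_apply, Fin.ext_iff, he,
    Function.comp_apply]
  split_ifs <;> first | rfl | omega

lemma det_triMat_succ_succ {m : ℕ} (x : Fin (m + 2) → R) : (triMat x).det =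
    x 0 * (triMat (x ∘ Fin.succ)).det - (triMat (x ∘ Fin.succ ∘ Fin.succ)).det := by
  have h₀ : (triMat x).submatrix Fin.succ (Fin.succAbove 0) = triMat (x ∘ Fin.succ) := by
    rw [Fin.succAbove_zero]
    exact triMat_submatrix_of_val_eq_add x 1 fun s => by simp [add_comm]
  have h₁ : (triMat x).submatrix (Fin.succ ∘ Fin.succ) (Fin.succAbove 1 ∘ Fin.succ) =
      triMat (x ∘ Fin.succ ∘ Fin.succ) := by
    convert triMat_submatrix_of_val_eq_add x 2 (e := Fin.succ ∘ Fin.succ)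
      fun s => by simp; omega using 2
    ext s
    simp [Fin.succAbove, Fin.lt_def]
  have hminor : ((triMat x).submatrix Fin.succ (Fin.succAbove 1)).det =
      -(triMat (x ∘ Fin.succ ∘ Fin.succ)).det := by
    rw [Matrix.det_succ_column_zero, Fin.sum_univ_succ, Finset.sum_eq_zero]
    · rw [Fin.succAbove_zero, Matrix.submatrix_submatrix, h₁]
      simp [triMat]
    · intro j _
      simp [triMat, Fin.ext_iff]
  rw [Matrix.det_succ_row_zero, Fin.sum_univ_succ, Fin.sum_univ_succ, Finset.sum_eq_zero]
  · have e₀ : triMat x 0 0 = x 0 := by simp [triMat]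
    have e₁ : triMat x 0 1 = -1 := by simp [triMat]
    rw [Fin.succ_zero_eq_one, h₀, hminor, e₀, e₁]
    simp [sub_eq_add_neg]
  · intro j _
    simp [triMat, Fin.ext_iff]

lemma det_triMat : ∀ {n : ℕ} (x : Fin n → R), (triMat x).det = Zc (List.ofFn x)
  | 0, _ => by simp [Zc, Zrev]
  | 1, x => by simp [triMat, Zc, Zrev]
  | _ + 2, x => by
    rw [det_triMat_succ_succ, det_triMat, det_triMat]
    simp only [List.ofFn_succ, Zc_cons_cons, Function.comp_def]

lemma Zseg_nonneg_of_posSemidef {g : ℕ → ℤ} {r : ℕ}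
    (h : (triMat fun i : Fin r => (g (i + 1) : ℝ)).PosSemidef) {j i : ℕ} (hji : j ≤ i)
    (hir : i ≤ r) : 0 ≤ Zseg g j i := by
  have hdet := (h.submatrix fun s : Fin (i - j) => ⟨j + s, by omega⟩).det_nonneg
  rw [triMat_submatrix_of_val_eq_add _ j fun _ => rfl, det_triMat] at hdet
  have hlist : List.ofFn (fun s : Fin (i - j) => (g (j + s + 1) : ℝ)) =
      (List.range' (j + 1) (i - j)).map (Int.castRingHom ℝ ∘ g) := by
    refine List.ext_getElem (by simp) fun n _ _ => ?_
    simp [add_right_comm]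
  rw [Function.comp_def, hlist, ← List.map_map, map_Zc] at hdet
  simpa [Zseg] using hdet

end Tridiagonal

open Polynomial in
lemma prod_add_algebraMap_mul_of_prod_X_add_C {ι R S : Type*} [CommSemiring R]
    [CommSemiring S] [Algebra R S] {s : Finset ι} {ξ : ι → R} {t : R}
    (h : ∏ ℓ ∈ s, (X + C (ξ ℓ)) = X ^ s.card + C t) (u v : S) :
    ∏ ℓ ∈ s, (u + algebraMap R S (ξ ℓ) * v) = u ^ s.card + algebraMap R S t * v ^ s.card := by
  have hhom := congrArg (fun p => MvPolynomial.aeval ![u, v] (p.homogenize s.card)) h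
  rw [Finset.card_eq_sum_ones s,
    homogenize_finsetProd fun _ _ => natDegree_add_C.trans_le natDegree_X_le] at hhom
  simpa [← Finset.card_eq_sum_ones, add_comm, mul_comm] using hhom

open Polynomial in
lemma isMonicOfDegree_pow_add_C_mul_pow {R : Type*} [Semiring R] {q : R[X]} {n a k : ℕ} {c : R}
    (hq : IsMonicOfDegree q n) (hn : 0 < n) (ha : 0 < a) (h : k < a ∨ c = 0) :
    IsMonicOfDegree (q ^ a + C c * q ^ k) (n * a) := by
  refine (hq.pow a).add_right ?_
  rcases h with hk | rfl
  · calc (C c * q ^ k).natDegree ≤ (q ^ k).natDegree := natDegree_C_mul_le _ _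
      _ = n * k := (hq.pow k).natDegree_eq
      _ < n * a := Nat.mul_lt_mul_of_pos_left hk hn
  · simpa using Nat.mul_pos hn ha

open Polynomial in
lemma monic_of_mul_eq_pow_add_C_mul_pow {R : Type*} [Semiring R] [Nontrivial R] {r : ℕ}
    {a k : ℕ → ℕ} {c : R} {p : ℕ → R[X]} (hp0 : p 0 = 1) (hp1 : p 1 = X)
    (ha : ∀ i < r, 2 ≤ a (i + 1))
    (hc : ∀ i < r, k (i + 1) < a (i + 1) ∨ c = 0)
    (hrec : ∀ i < r, p i * p (i + 2) = p (i + 1) ^ a (i + 1) + C c * p (i + 1) ^ k (i + 1)) :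
    ∀ i ≤ r + 1, (p i).Monic := by
  have chain : ∀ i ≤ r,
      ∃ m n, m < n ∧ IsMonicOfDegree (p i) m ∧ IsMonicOfDegree (p (i + 1)) n := by
    intro i
    induction i with
    | zero => exact fun _ => ⟨0, 1, one_pos, by simp [hp0], hp1 ▸ isMonicOfDegree_X R⟩
    | succ i ih =>
      intro hi
      obtain ⟨m, n, hmn, hm, hn⟩ := ih (by omega)
      have hrhs := isMonicOfDegree_pow_add_C_mul_pow hn (by omega) (by linarith [ha i hi])
        (hc i hi)
      have h2n : 2 * n ≤ n * a (i + 1) := by nlinarith [ha i hi]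
      rw [← hrec i hi, show n * a (i + 1) = m + (n * a (i + 1) - m) by omega] at hrhs
      exact ⟨n, _, by omega, hn, hm.of_mul_left hrhs⟩
  intro i hi
  obtain rfl | hi := hi.eq_or_lt
  · obtain ⟨_, _, _, _, hn⟩ := chain r le_rfl
    exact hn.monic
  · obtain ⟨_, _, _, hm, _⟩ := chain i (by omega)
    exact hm.monic

open Polynomial in
lemma mul_eq_pow_mul_prod {R S : Type*} [CommSemiring R] [CommSemiring S] [Algebra R S]
    {x y z v : S} {a k : ℕ} {t : R} {ξ : ℕ → R} (hka : k ≤ a)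
    (h : x * y = z ^ a + algebraMap R S t * z ^ k * v ^ (a - k))
    (hξ : ∏ ℓ ∈ Finset.Icc 1 (a - k), (X + C (ξ ℓ)) = X ^ (a - k) + C t) :
    x * y = z ^ k * ∏ ℓ ∈ Finset.Icc 1 (a - k), (z + algebraMap R S (ξ ℓ) * v) := by
  have hprod := prod_add_algebraMap_mul_of_prod_X_add_C
    (by rw [Nat.card_Icc, Nat.add_sub_cancel]; exact hξ) z v
  rw [Nat.card_Icc, Nat.add_sub_cancel] at hprod
  rw [hprod, h, mul_add, ← pow_add, Nat.add_sub_cancel' hka]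
  ring

open Polynomial in
lemma lt_or_eq_zero_of_prod_X_add_C {R : Type*} [CommRing R] {a k : ℕ} {t : R} {ξ : ℕ → R}
    (hka : k ≤ a) (hξ : ∏ ℓ ∈ Finset.Icc 1 (a - k), (X + C (ξ ℓ)) = X ^ (a - k) + C t) :
    k < a ∨ t = 0 :=
  hka.lt_or_eq.imp_right fun h => by simpa [h] using hξ

open MvPolynomial in
lemma ne_zero_of_mul_eq_pow_add {R : Type*} [CommRing R] [Nontrivial R] {r : ℕ} {a k E : ℕ → ℕ}
    {t : R} {P : ℕ → MvPolynomial (Fin 2) R}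
    (hP0 : P 0 = 1) (hP1 : P 1 = X 1) (ha : ∀ i < r, 2 ≤ a (i + 1))
    (ht : ∀ i < r, k (i + 1) < a (i + 1) ∨ t = 0)
    (hrec : ∀ i < r, P i * P (i + 2) = P (i + 1) ^ a (i + 1) +
      C t * P (i + 1) ^ k (i + 1) * X 0 ^ ((a (i + 1) - k (i + 1)) * E (i + 1)))
    {i : ℕ} (hi : i ≤ r + 1) : P i ≠ 0 := by
  let θ : MvPolynomial (Fin 2) R →ₐ[R] Polynomial R := aeval ![1, Polynomial.X]
  have hmonic := monic_of_mul_eq_pow_add_C_mul_pow (p := fun i => θ (P i)) (c := t)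
    (by simp [hP0]) (by simp [θ, hP1]) ha ht
    (fun i hi => by simpa [θ] using congrArg θ (hrec i hi))
  exact fun h => (hmonic i hi).ne_zero (by simp [h])

lemma eq_prod_pow_of_mul_eq_pow_mul {M : Type*} [CommMonoidWithZero M] [IsCancelMulZero M]
    {r : ℕ} {k : ℕ → ℕ} {e : ℕ → ℕ → ℕ} {P W : ℕ → M} (he_self : ∀ j, e j j = 1)
    (he_succ : ∀ j, e j (j + 1) = k (j + 1))
    (he_rec : ∀ j i, j ≤ i → i + 2 ≤ r → e j (i + 2) + e j i = k (i + 2) * e j (i + 1))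
    (hP0 : P 0 = 1) (hP1 : P 1 = W 0) (hP : ∀ i ≤ r, P i ≠ 0)
    (hrec : ∀ i < r, P i * P (i + 2) = P (i + 1) ^ k (i + 1) * W (i + 1)) :
    ∀ i ≤ r, P (i + 1) = ∏ j ∈ Finset.range (i + 1), W j ^ e j i := by
  intro i
  induction i using Nat.strong_induction_on with
  | _ i ih =>
    intro hi
    match i with
    | 0 => simp [hP1, he_self]
    | 1 =>
      have h := hrec 0 (by omega)
      rw [hP0, one_mul, hP1] at h
      simp [Finset.prod_range_succ, h, he_self, he_succ]
    | m + 2 =>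
      have hexp : ∀ j ∈ Finset.range (m + 1),
          W j ^ e j m * W j ^ e j (m + 2) = (W j ^ e j (m + 1)) ^ k (m + 2) := by
        intro j hj
        rw [← pow_add, ← pow_mul, add_comm, he_rec j m (by simpa [Nat.lt_succ_iff] using hj) hi,
          mul_comm]
      apply mul_left_cancel₀ (hP (m + 1) (by omega))
      rw [hrec (m + 1) (by omega), ih (m + 1) (by omega) (by omega), ih m (by omega) (by omega)]
      calc (∏ j ∈ Finset.range (m + 2), W j ^ e j (m + 1)) ^ k (m + 2) * W (m + 2)
          = (∏ j ∈ Finset.range (m + 1), (W j ^ e j (m + 1)) ^ k (m + 2)) *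
              W (m + 1) ^ k (m + 2) * W (m + 2) := by
            rw [Finset.prod_range_succ, he_self, pow_one, mul_pow, Finset.prod_pow]
        _ = (∏ j ∈ Finset.range (m + 1), W j ^ e j m) *
              ((∏ j ∈ Finset.range (m + 1), W j ^ e j (m + 2)) *
                W (m + 1) ^ k (m + 2) * W (m + 2)) := by
            rw [← Finset.prod_congr rfl hexp, Finset.prod_mul_distrib]
            ac_rfl
        _ = _ := by
            rw [Finset.prod_range_succ _ (m + 2), Finset.prod_range_succ _ (m + 1), he_self,
              he_succ, pow_one]

/-- the irreducible factorization of `P_{r+1}` (here over `ℂ[z_0,z_1]` with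
`z_0 = X 0`, `z_1 = X 1`):
`P_{r+1} = ∏_{j=1}^{r} ∏_{ℓ=1}^{a_j-k_j} (P_j + ξ_{j,ℓ}·z_0^{Z_{j-2}(a_2,…,a_{j-1})})^{Z_{j-1}(k_1,…,k_{j-1})}`,
where `∏_ℓ (X + ξ_{j,ℓ}) = X^{a_j-k_j} + t`. -/
theorem P_succ_r_factorization (r : ℕ) (a k : ℕ → ℕ)
    (ha : ∀ i, 1 ≤ i → i ≤ r → 2 ≤ a i)
    (hk : ∀ i, 1 ≤ i → i ≤ r → k i ≤ a i)
    (hadm : Admissible fun i : Fin r => k (i.1 + 1))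
    (hk0 : Zc ((List.range' 1 r).map fun i => (k i : ℤ)) = 0)
    (t : ℂ) (P : ℕ → MvPolynomial (Fin 2) ℂ)
    (hP0 : P 0 = 1) (hP1 : P 1 = MvPolynomial.X 1)
    (hPrec : ∀ i, 1 ≤ i → i ≤ r →
      P (i - 1) * P (i + 1) =
        P i ^ a i + MvPolynomial.C t * P i ^ k i *
          MvPolynomial.X 0 ^
            ((a i - k i) *
              (if i = 1 then 0
                else (Zc ((List.range' 2 (i - 2)).map fun j => (a j : ℤ))).toNat)))
    (ξ : ℕ → ℕ → ℂ)
    (hξ : ∀ j, 1 ≤ j → j ≤ r →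
      ∏ ℓ ∈ Finset.Icc 1 (a j - k j), (Polynomial.X + Polynomial.C (ξ j ℓ)) =
        Polynomial.X ^ (a j - k j) + Polynomial.C t) :
    P (r + 1) =
      ∏ j ∈ Finset.Icc 1 r, ∏ ℓ ∈ Finset.Icc 1 (a j - k j),
        (P j + MvPolynomial.C (ξ j ℓ) *
            MvPolynomial.X 0 ^
              (if j = 1 then 0
                else (Zc ((List.range' 2 (j - 2)).map fun i => (a i : ℤ))).toNat)) ^
          (Zc ((List.range' 1 (j - 1)).map fun i => (k i : ℤ))).toNat := by
  set g : ℕ → ℤ := fun i => (k i : ℤ)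
  set E : ℕ → ℕ := fun j =>
    if j = 1 then 0 else (Zc ((List.range' 2 (j - 2)).map fun i => (a i : ℤ))).toNat
  have hnn : ∀ j i, j ≤ i → i ≤ r → 0 ≤ Zseg g j i := fun j i =>
    Zseg_nonneg_of_posSemidef (by simpa [g] using hadm.1)
  have hrec : ∀ i < r, P i * P (i + 2) = P (i + 1) ^ a (i + 1) + MvPolynomial.C t *
      P (i + 1) ^ k (i + 1) * MvPolynomial.X 0 ^ ((a (i + 1) - k (i + 1)) * E (i + 1)) :=
    fun i hi => hPrec (i + 1) (by omega) (by omega)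
  have ht : ∀ i < r, k (i + 1) < a (i + 1) ∨ t = 0 := fun i hi =>
    lt_or_eq_zero_of_prod_X_add_C (hk (i + 1) (by omega) hi) (hξ (i + 1) (by omega) hi)
  -- `z_1` enters as the factor of index `0`, with exponent `Z(k_1..k_i)`.
  set W : ℕ → MvPolynomial (Fin 2) ℂ := fun j => if j = 0 then MvPolynomial.X 1 else
    ∏ ℓ ∈ Finset.Icc 1 (a j - k j), (P j + MvPolynomial.C (ξ j ℓ) * MvPolynomial.X 0 ^ E j)
  have hfac : ∀ i < r, P i * P (i + 2) = P (i + 1) ^ k (i + 1) * W (i + 1) := fun i hi => by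
    have h := hrec i hi
    rw [mul_comm (_ - _), pow_mul, ← MvPolynomial.algebraMap_eq (R := ℂ)] at h
    simpa [W, MvPolynomial.algebraMap_eq] using
      mul_eq_pow_mul_prod (hk (i + 1) (by omega) hi) h (hξ (i + 1) (by omega) hi)
  have hP : ∀ i ≤ r, P i ≠ 0 := fun i hi =>
    ne_zero_of_mul_eq_pow_add hP0 hP1 (fun i hi => ha (i + 1) (by omega) hi) ht hrec (by omega)
  have hclosed := eq_prod_pow_of_mul_eq_pow_mul (e := fun j i => (Zseg g j i).toNat)
    (by simp) (by simp [g]) (fun j i => toNat_Zseg_add_two_add hnn) hP0 (by simp [W, hP1])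
    hP hfac r le_rfl
  rw [hclosed, Finset.prod_range_eq_mul_Ico _ (by omega : 0 < r + 1),
    Finset.Ico_add_one_right_eq_Icc, show Zseg g 0 r = 0 from hk0, Int.toNat_zero, pow_zero,
    one_mul]
  refine Finset.prod_congr rfl fun j hj => ?_
  obtain ⟨hj₁, hjr⟩ := Finset.mem_Icc.mp hj
  obtain ⟨j, rfl⟩ := Nat.exists_eq_add_of_le' hj₁
  rw [Zseg_succ_eq_of_Zseg_eq_zero hk0 hnn hjr, Finset.prod_pow]
  rfl
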